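/- arXiv:2506.09077 — 2 statements merged into one kernel-verified Lean document; each statement's English description precedes it below -/
import Mathlib

section
/- Along each edge of the saturation triangle (excluding its endpoints), the direction vector of that edge is an eigenvector of the Jacobian J(u) of the flux map with eigenvalue tr J(u): for u on the edge s_w = 0 the vector (0,1) satisfies J(u)(0,1) = tr J(u)·(0,1); for u on the edge s_g = 0 the vector (1,0) satisfies J(u)(1,0) = tr J(u)·(1,0); and for u on the edge s_w + s_g = 1 the vector (1,−1) satisfies J(u)(1,−1) = tr J(u)·(1,−1). -/
open Matrix Polynomial

noncomputable section ThreePhaseFlow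

/-- Oil saturation `s_o = 1 - s_w - s_g`. -/
def so (u : ℝ × ℝ) : ℝ := 1 - u.1 - u.2

/-- The denominator `D(u) = s_w^2/μ_w + s_g^2/μ_g + s_o^2/μ_o`. -/
def Dfun (μw μg μo : ℝ) (u : ℝ × ℝ) : ℝ :=
  u.1 ^ 2 / μw + u.2 ^ 2 / μg + so u ^ 2 / μo

/-- Water fractional flow `f_w`. -/
def fw (μw μg μo : ℝ) (u : ℝ × ℝ) : ℝ := u.1 ^ 2 / (μw * Dfun μw μg μo u)

/-- Gas fractional flow `f_g`. -/
def fg (μw μg μo : ℝ) (u : ℝ × ℝ) : ℝ := u.2 ^ 2 / (μg * Dfun μw μg μo u)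

/-- Oil fractional flow `f_o`. -/
def fo (μw μg μo : ℝ) (u : ℝ × ℝ) : ℝ := so u ^ 2 / (μo * Dfun μw μg μo u)

/-- The flux map `F(u) = (f_w(u), f_g(u))`. -/
def flux (μw μg μo : ℝ) (u : ℝ × ℝ) : ℝ × ℝ :=
  (fw μw μg μo u, fg μw μg μo u)

/-- The saturation triangle `Δ`. -/
def satTriangle : Set (ℝ × ℝ) := {u | 0 ≤ u.1 ∧ 0 ≤ u.2 ∧ u.1 + u.2 ≤ 1}

/-- The Jacobian matrix `J(u)` of the flux map at `u`. -/
def jac (μw μg μo : ℝ) (u : ℝ × ℝ) : Matrix (Fin 2) (Fin 2) ℝ :=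
  !![fderiv ℝ (fw μw μg μo) u (1, 0), fderiv ℝ (fw μw μg μo) u (0, 1);
     fderiv ℝ (fg μw μg μo) u (1, 0), fderiv ℝ (fg μw μg μo) u (0, 1)]

/-- `D` is positive everywhere on the plane. -/
lemma Dpos (μw μg μo : ℝ) (hw : 0 < μw) (hg : 0 < μg) (ho : 0 < μo) (u : ℝ × ℝ) :
    0 < Dfun μw μg μo u := by
  have h1 : 0 ≤ u.1 ^ 2 / μw := div_nonneg (sq_nonneg _) hw.le
  have h2 : 0 ≤ u.2 ^ 2 / μg := div_nonneg (sq_nonneg _) hg.le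
  have h3 : 0 ≤ so u ^ 2 / μo := div_nonneg (sq_nonneg _) ho.le
  rcases eq_or_ne u.1 0 with hx | hx
  · rcases eq_or_ne u.2 0 with hy | hy
    · have hso : so u = 1 := by simp [so, hx, hy]
      have : (0:ℝ) < so u ^ 2 / μo := by rw [hso]; positivity
      unfold Dfun; linarith
    · have : (0:ℝ) < u.2 ^ 2 / μg := div_pos (by positivity) hg
      unfold Dfun; linarith
  · have : (0:ℝ) < u.1 ^ 2 / μw := div_pos (by positivity) hw
    unfold Dfun; linarith

lemma Ddiff (μw μg μo : ℝ) : Differentiable ℝ (Dfun μw μg μo) := by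
  unfold Dfun so
  fun_prop

/-- Key lemma: at a point where `p` vanishes, `p^2 / h` has zero derivative. -/
lemma key_hasFDerivAt {p h : ℝ × ℝ → ℝ} {u : ℝ × ℝ} (hp : DifferentiableAt ℝ p u)
    (hh : DifferentiableAt ℝ h u) (hpu : p u = 0) (hhu : h u ≠ 0) :
    HasFDerivAt (fun v => p v ^ 2 / h v) (0 : ℝ × ℝ →L[ℝ] ℝ) u := by
  have hg : HasFDerivAt (fun v => p v * p v) (0 : ℝ × ℝ →L[ℝ] ℝ) u := by
    have := hp.hasFDerivAt.mul hp.hasFDerivAt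
    exact this.congr_fderiv (by simp [hpu])
  have hinv : DifferentiableAt ℝ (fun v => (h v)⁻¹) u := hh.inv hhu
  have hmul := hg.mul hinv.hasFDerivAt
  have : HasFDerivAt (fun v => p v * p v * (h v)⁻¹) (0 : ℝ × ℝ →L[ℝ] ℝ) u := by
    exact hmul.congr_fderiv (by simp [hpu])
  have heq : (fun v => p v ^ 2 / h v) = fun v => p v * p v * (h v)⁻¹ := by
    funext v; rw [sq, div_eq_mul_inv]
  rw [heq]
  exact this

section Main

variable {μw μg μo : ℝ}

lemma denom_ne (hw : 0 < μw) (hg : 0 < μg) (ho : 0 < μo) (c : ℝ) (hc : 0 < c) (u : ℝ × ℝ) :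
    c * Dfun μw μg μo u ≠ 0 :=
  (mul_pos hc (Dpos μw μg μo hw hg ho u)).ne'

lemma fw_diff (hw : 0 < μw) (hg : 0 < μg) (ho : 0 < μo) (u : ℝ × ℝ) :
    DifferentiableAt ℝ (fw μw μg μo) u := by
  unfold fw
  have h1 : DifferentiableAt ℝ (fun v : ℝ × ℝ => v.1 ^ 2) u := by fun_prop
  have h2 : DifferentiableAt ℝ (fun v => μw * Dfun μw μg μo v) u :=
    (differentiableAt_const μw).mul ((Ddiff μw μg μo) u)
  simp only [div_eq_mul_inv]
  exact h1.mul (h2.inv (denom_ne hw hg ho μw hw u))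

lemma fg_diff (hw : 0 < μw) (hg : 0 < μg) (ho : 0 < μo) (u : ℝ × ℝ) :
    DifferentiableAt ℝ (fg μw μg μo) u := by
  unfold fg
  have h1 : DifferentiableAt ℝ (fun v : ℝ × ℝ => v.2 ^ 2) u := by fun_prop
  have h2 : DifferentiableAt ℝ (fun v => μg * Dfun μw μg μo v) u :=
    (differentiableAt_const μg).mul ((Ddiff μw μg μo) u)
  simp only [div_eq_mul_inv]
  exact h1.mul (h2.inv (denom_ne hw hg ho μg hg u))

/-- On the edge `s_w = 0`, the water flux has zero derivative. -/
lemma fderiv_fw_zero (hw : 0 < μw) (hg : 0 < μg) (ho : 0 < μo) {u : ℝ × ℝ} (hu : u.1 = 0) :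
    fderiv ℝ (fw μw μg μo) u = 0 := by
  have h := key_hasFDerivAt (p := fun v : ℝ × ℝ => v.1)
    (h := fun v => μw * Dfun μw μg μo v) (u := u)
    (by fun_prop) ((differentiableAt_const μw).mul ((Ddiff μw μg μo) u)) hu
    (denom_ne hw hg ho μw hw u)
  exact h.fderiv

/-- On the edge `s_g = 0`, the gas flux has zero derivative. -/
lemma fderiv_fg_zero (hw : 0 < μw) (hg : 0 < μg) (ho : 0 < μo) {u : ℝ × ℝ} (hu : u.2 = 0) :
    fderiv ℝ (fg μw μg μo) u = 0 := by
  have h := key_hasFDerivAt (p := fun v : ℝ × ℝ => v.2)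
    (h := fun v => μg * Dfun μw μg μo v) (u := u)
    (by fun_prop) ((differentiableAt_const μg).mul ((Ddiff μw μg μo) u)) hu
    (denom_ne hw hg ho μg hg u)
  exact h.fderiv

/-- On the edge `s_o = 0`, the sum of derivatives of water and gas fluxes vanishes. -/
lemma fderiv_sum_zero (hw : 0 < μw) (hg : 0 < μg) (ho : 0 < μo) {u : ℝ × ℝ}
    (hu : u.1 + u.2 = 1) :
    fderiv ℝ (fw μw μg μo) u + fderiv ℝ (fg μw μg μo) u = 0 := by
  have hso : so u = 0 := by simp [so]; linarith
  have hfo : HasFDerivAt (fo μw μg μo) (0 : ℝ × ℝ →L[ℝ] ℝ) u := by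
    have h := key_hasFDerivAt (p := so)
      (h := fun v => μo * Dfun μw μg μo v) (u := u)
      (by unfold so; fun_prop) ((differentiableAt_const μo).mul ((Ddiff μw μg μo) u)) hso
      (denom_ne hw hg ho μo ho u)
    exact h
  have hsum : (fun v => fw μw μg μo v + fg μw μg μo v) = fun v => 1 - fo μw μg μo v := by
    funext v
    have hD := (Dpos μw μg μo hw hg ho v).ne'
    unfold fw fg fo
    rw [eq_sub_iff_add_eq]
    field_simp
    unfold Dfun
    field_simp
  have h1 : HasFDerivAt (fun v => fw μw μg μo v + fg μw μg μo v)
      (fderiv ℝ (fw μw μg μo) u + fderiv ℝ (fg μw μg μo) u) u :=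
    (fw_diff hw hg ho u).hasFDerivAt.add (fg_diff hw hg ho u).hasFDerivAt
  have h2 : HasFDerivAt (fun v => fw μw μg μo v + fg μw μg μo v)
      (0 : ℝ × ℝ →L[ℝ] ℝ) u := by
    rw [hsum]
    simpa using hfo.const_sub 1
  exact h1.unique h2

end Main

/-- along each edge of the saturation triangle (excluding endpoints) the
edge direction is an eigenvector of the Jacobian with eigenvalue `tr J(u)`. -/
theorem edge_direction_eigenvector (μw μg μo : ℝ) (hw : 0 < μw) (hg : 0 < μg) (ho : 0 < μo) :
    ∀ u ∈ satTriangle,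
      (u.1 = 0 → u ≠ ((0 : ℝ), (0 : ℝ)) → u ≠ ((0 : ℝ), (1 : ℝ)) →
        (jac μw μg μo u).mulVec (![0, 1] : Fin 2 → ℝ) =
          (jac μw μg μo u).trace • (![0, 1] : Fin 2 → ℝ)) ∧
      (u.2 = 0 → u ≠ ((0 : ℝ), (0 : ℝ)) → u ≠ ((1 : ℝ), (0 : ℝ)) →
        (jac μw μg μo u).mulVec (![1, 0] : Fin 2 → ℝ) =
          (jac μw μg μo u).trace • (![1, 0] : Fin 2 → ℝ)) ∧
      (u.1 + u.2 = 1 → u ≠ ((0 : ℝ), (1 : ℝ)) → u ≠ ((1 : ℝ), (0 : ℝ)) →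
        (jac μw μg μo u).mulVec (![1, -1] : Fin 2 → ℝ) =
          (jac μw μg μo u).trace • (![1, -1] : Fin 2 → ℝ)) := by
  intro u _
  refine ⟨?_, ?_, ?_⟩
  · intro h1 _ _
    have hz := fderiv_fw_zero hw hg ho h1
    funext i
    fin_cases i <;>
      simp [jac, Matrix.mulVec, dotProduct, Fin.sum_univ_two, Matrix.trace_fin_two, hz]
  · intro h1 _ _
    have hz := fderiv_fg_zero hw hg ho h1
    funext i
    fin_cases i <;>
      simp [jac, Matrix.mulVec, dotProduct, Fin.sum_univ_two, Matrix.trace_fin_two, hz]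
  · intro h1 _ _
    have hz := fderiv_sum_zero hw hg ho h1
    have hx : fderiv ℝ (fw μw μg μo) u (1, 0) + fderiv ℝ (fg μw μg μo) u (1, 0) = 0 := by
      have := congrArg (fun L : ℝ × ℝ →L[ℝ] ℝ => L (1, 0)) hz
      simpa using this
    have hy : fderiv ℝ (fw μw μg μo) u (0, 1) + fderiv ℝ (fg μw μg μo) u (0, 1) = 0 := by
      have := congrArg (fun L : ℝ × ℝ →L[ℝ] ℝ => L (0, 1)) hz
      simpa using this
    funext i
    fin_cases i <;>
      simp [jac, Matrix.mulVec, dotProduct, Fin.sum_univ_two, Matrix.trace_fin_two] <;>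
      linarith

end ThreePhaseFlow
end

section
/- If two distinct states M, N in the saturation triangle Δ both lie on one common edge of Δ (s_w = 0, or s_g = 0, or s_w + s_g = 1), or both lie on one common line among {μ_o s_w = μ_w s_o}, {μ_o s_g = μ_g s_o}, {μ_g s_w = μ_w s_g}, then M and N satisfy the Rankine–Hugoniot condition: there exists σ ∈ ℝ such that σ·(M − N) = F(M) − F(N). In particular the Hugoniot locus of a state on an edge or on one of the invariant segments G–D, W–E, O–B contains that whole edge or segment. -/
open Matrix Polynomial

noncomputable section ThreePhaseFlow

/-- Two vectors in `ℝ²` orthogonal to a common nonzero covector are parallel. -/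
lemma aux_par {α β : ℝ} (hαβ : α ≠ 0 ∨ β ≠ 0) {M N : ℝ × ℝ} (hMN : M ≠ N)
    (hd : α * (M.1 - N.1) + β * (M.2 - N.2) = 0)
    {a b : ℝ} (hf : α * a + β * b = 0) :
    ∃ σ : ℝ, σ • (M - N) = (a, b) := by
  have hne : M.1 ≠ N.1 ∨ M.2 ≠ N.2 := by
    by_contra h; push_neg at h; exact hMN (Prod.ext h.1 h.2)
  rcases hne with h1 | h2
  · have hd1 : M.1 - N.1 ≠ 0 := sub_ne_zero.mpr h1
    have hβ : β ≠ 0 := by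
      rintro rfl
      have hα : α ≠ 0 := hαβ.resolve_right (by simp)
      simp only [mul_zero, zero_mul, add_zero] at hd
      exact hd1 ((mul_eq_zero.mp hd).resolve_left hα)
    refine ⟨a / (M.1 - N.1), ?_⟩
    have e1 : a / (M.1 - N.1) * (M.1 - N.1) = a := div_mul_cancel₀ a hd1
    have e2 : a / (M.1 - N.1) * (M.2 - N.2) = b := by
      apply mul_left_cancel₀ hβ
      field_simp
      rw [← mul_right_inj' hβ]
      linear_combination a * hd - (M.1 - N.1) * hf
    exact Prod.ext (by simpa using e1) (by simpa using e2)
  · have hd2 : M.2 - N.2 ≠ 0 := sub_ne_zero.mpr h2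
    have hα : α ≠ 0 := by
      rintro rfl
      have hβ : β ≠ 0 := hαβ.resolve_left (by simp)
      simp only [mul_zero, zero_mul, zero_add] at hd
      exact hd2 ((mul_eq_zero.mp hd).resolve_left hβ)
    refine ⟨b / (M.2 - N.2), ?_⟩
    have e1 : b / (M.2 - N.2) * (M.1 - N.1) = a := by
      apply mul_left_cancel₀ hα
      field_simp
      rw [← mul_right_inj' hα]
      linear_combination b * hd - (M.2 - N.2) * hf
    have e2 : b / (M.2 - N.2) * (M.2 - N.2) = b := div_mul_cancel₀ b hd2
    exact Prod.ext (by simpa using e1) (by simpa using e2)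

/-- The denominator is strictly positive everywhere. -/
lemma aux_Dpos {μw μg μo : ℝ} (hw : 0 < μw) (hg : 0 < μg) (ho : 0 < μo)
    (u : ℝ × ℝ) : 0 < Dfun μw μg μo u := by
  rcases eq_or_ne u.1 0 with h1 | h1
  · rcases eq_or_ne u.2 0 with h2 | h2
    · have : so u = 1 := by simp [so, h1, h2]
      unfold Dfun
      rw [this, h1, h2]
      norm_num
      positivity
    · have t2 : 0 < u.2 ^ 2 / μg := by positivity
      have t1 : 0 ≤ u.1 ^ 2 / μw := by positivity
      have t3 : 0 ≤ so u ^ 2 / μo := by positivity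
      unfold Dfun; linarith
  · have t1 : 0 < u.1 ^ 2 / μw := by positivity
    have t2 : 0 ≤ u.2 ^ 2 / μg := by positivity
    have t3 : 0 ≤ so u ^ 2 / μo := by positivity
    unfold Dfun; linarith

/-- The fractional flows sum to one. -/
lemma aux_sum {μw μg μo : ℝ} (hw : μw ≠ 0) (hg : μg ≠ 0) (ho : μo ≠ 0)
    {u : ℝ × ℝ} (hD : Dfun μw μg μo u ≠ 0) :
    fw μw μg μo u + fg μw μg μo u + fo μw μg μo u = 1 := by
  unfold fw fg fo
  field_simp
  unfold Dfun at hD ⊢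
  field_simp at hD ⊢

lemma aux_rel4 {μw μg μo : ℝ} (hw : μw ≠ 0) (hg : μg ≠ 0) (ho : μo ≠ 0) (hD : Dfun μw μg μo u ≠ 0)
    (hline : μo * u.1 = μw * so u) :
    μo * fw μw μg μo u = μw * fo μw μg μo u := by
  unfold fw fo
  field_simp
  linear_combination (μo * u.1 + μw * so u) * hline

lemma aux_rel5 {μw μg μo : ℝ} (hw : μw ≠ 0) (hg : μg ≠ 0) (ho : μo ≠ 0) (hD : Dfun μw μg μo u ≠ 0)
    (hline : μo * u.2 = μg * so u) :
    μo * fg μw μg μo u = μg * fo μw μg μo u := by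
  unfold fg fo
  field_simp
  linear_combination (μo * u.2 + μg * so u) * hline

lemma aux_rel6 {μw μg μo : ℝ} (hw : μw ≠ 0) (hg : μg ≠ 0) (ho : μo ≠ 0) (hD : Dfun μw μg μo u ≠ 0)
    (hline : μg * u.1 = μw * u.2) :
    μg * fw μw μg μo u = μw * fg μw μg μo u := by
  unfold fw fg
  field_simp
  linear_combination (μg * u.1 + μw * u.2) * hline

/-- two distinct states lying on a common edge of the saturation
triangle, or on a common one of the invariant lines `G–D`, `W–E`, `O–B`, satisfy the
Rankine–Hugoniot condition for some speed `σ`. -/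
theorem rankine_hugoniot_on_edges_and_invariant_lines (μw μg μo : ℝ)
    (hw : 0 < μw) (hg : 0 < μg) (ho : 0 < μo) :
    ∀ M ∈ satTriangle, ∀ N ∈ satTriangle, M ≠ N →
      ((M.1 = 0 ∧ N.1 = 0) ∨ (M.2 = 0 ∧ N.2 = 0) ∨
        (M.1 + M.2 = 1 ∧ N.1 + N.2 = 1) ∨
        (μo * M.1 = μw * so M ∧ μo * N.1 = μw * so N) ∨
        (μo * M.2 = μg * so M ∧ μo * N.2 = μg * so N) ∨
        (μg * M.1 = μw * M.2 ∧ μg * N.1 = μw * N.2)) →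
      ∃ σ : ℝ, σ • (M - N) = flux μw μg μo M - flux μw μg μo N := by
  rintro M hM N hN hMN (⟨h1, h2⟩ | ⟨h1, h2⟩ | ⟨h1, h2⟩ | ⟨h1, h2⟩ | ⟨h1, h2⟩ | ⟨h1, h2⟩) <;>
    [skip; skip; skip; skip; skip; skip]
  all_goals
    have hDM : Dfun μw μg μo M ≠ 0 := (aux_Dpos hw hg ho M).ne'
    have hDN : Dfun μw μg μo N ≠ 0 := (aux_Dpos hw hg ho N).ne'
    have hgoal : flux μw μg μo M - flux μw μg μo N =
        (fw μw μg μo M - fw μw μg μo N, fg μw μg μo M - fg μw μg μo N) := rfl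
    rw [hgoal]
  · -- edge s_w = 0
    refine aux_par (α := 1) (β := 0) (Or.inl one_ne_zero) hMN (by rw [h1, h2]; ring) ?_
    have e1 : fw μw μg μo M = 0 := by simp [fw, h1]
    have e2 : fw μw μg μo N = 0 := by simp [fw, h2]
    simp [e1, e2]
  · -- edge s_g = 0
    refine aux_par (α := 0) (β := 1) (Or.inr one_ne_zero) hMN (by rw [h1, h2]; ring) ?_
    have e1 : fg μw μg μo M = 0 := by simp [fg, h1]
    have e2 : fg μw μg μo N = 0 := by simp [fg, h2]
    simp [e1, e2]
  · -- edge s_w + s_g = 1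
    refine aux_par (α := 1) (β := 1) (Or.inl one_ne_zero) hMN (by linarith) ?_
    have e1 : fo μw μg μo M = 0 := by simp [fo, so, show (1 : ℝ) - M.1 - M.2 = 0 by linarith]
    have e2 : fo μw μg μo N = 0 := by simp [fo, so, show (1 : ℝ) - N.1 - N.2 = 0 by linarith]
    have s1 := aux_sum hw.ne' hg.ne' ho.ne' hDM
    have s2 := aux_sum hw.ne' hg.ne' ho.ne' hDN
    rw [e1] at s1; rw [e2] at s2
    linarith
  · -- invariant line G–D
    have r1 := aux_rel4 hw.ne' hg.ne' ho.ne' hDM h1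
    have r2 := aux_rel4 hw.ne' hg.ne' ho.ne' hDN h2
    have s1 := aux_sum hw.ne' hg.ne' ho.ne' hDM
    have s2 := aux_sum hw.ne' hg.ne' ho.ne' hDN
    refine aux_par (α := μo + μw) (β := μw) (Or.inr hw.ne') hMN ?_ ?_
    · unfold so at h1 h2; linear_combination h1 - h2
    · linear_combination r1 - r2 + μw * s1 - μw * s2
  · -- invariant line W–E
    have r1 := aux_rel5 hw.ne' hg.ne' ho.ne' hDM h1
    have r2 := aux_rel5 hw.ne' hg.ne' ho.ne' hDN h2
    have s1 := aux_sum hw.ne' hg.ne' ho.ne' hDM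
    have s2 := aux_sum hw.ne' hg.ne' ho.ne' hDN
    refine aux_par (α := μg) (β := μo + μg) (Or.inl hg.ne') hMN ?_ ?_
    · unfold so at h1 h2; linear_combination h1 - h2
    · linear_combination r1 - r2 + μg * s1 - μg * s2
  · -- invariant line O–B
    have r1 := aux_rel6 hw.ne' hg.ne' ho.ne' hDM h1
    have r2 := aux_rel6 hw.ne' hg.ne' ho.ne' hDN h2
    refine aux_par (α := μg) (β := -μw) (Or.inl hg.ne') hMN ?_ ?_
    · linear_combination h1 - h2
    · linear_combination r1 - r2


end ThreePhaseFlow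
end
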